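/- arXiv:2411.00759 — 2 statements merged into one kernel-verified Lean document; each statement's English description precedes it below -/
import Mathlib

section
/- For the convex interpolant conditional flow p_t^i(x^i|x_0,x_1) = (1 − κ_t) δ_{x_0^i}(x^i) + κ_t δ_{x_1^i}(x^i) with κ differentiable and κ_t < 1, the velocity u_t^i(x^i, z | x_0, x_1) = (κ̇_t / (1 − κ_t)) [δ_{x_1^i}(x^i) − δ_{z^i}(x^i)] satisfies the continuity (Kolmogorov) equation: d/dt p_t^i(x^i|x_0,x_1) = ∑_{z^i ∈ [V]} u_t^i(x^i, z | x_0, x_1) p_t^i(z^i|x_0,x_1), where u_t^i depends on z only through z^i. -/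
/-! Since the velocity is affine in `δ_{z^i}`, summing it against any weight `p` gives
`κ̇_t / (1 - κ_t) · (δ_{x_1^i} · ∑ p - p)`. For the convex interpolant `∑ p = 1` and
`δ_{x_1^i} - p_t = (1 - κ_t) (δ_{x_1^i} - δ_{x_0^i})`, so the factor `1 - κ_t` cancels and
what remains is `κ̇_t (δ_{x_1^i} - δ_{x_0^i})`, the time derivative of `p_t`. -/

open Finset

theorem sum_mul_sub_ite_mul {α : Type*} [Fintype α] [DecidableEq α] (c : ℝ) (a v : α)
    (p : α → ℝ) :
    ∑ z, c * ((if v = a then (1:ℝ) else 0) - (if v = z then 1 else 0)) * p z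
      = c * ((if v = a then (1:ℝ) else 0) * ∑ z, p z - p v) := by
  simp_rw [mul_assoc, ← mul_sum, sub_mul, sum_sub_distrib, ← mul_sum, boole_mul, sum_ite_eq,
    mem_univ, if_true]

theorem sum_convex_interp_ite {α : Type*} [Fintype α] [DecidableEq α] (k : ℝ) (a b : α) :
    ∑ z, ((1 - k) * (if z = a then (1:ℝ) else 0) + k * (if z = b then 1 else 0)) = 1 := by
  simp only [sum_add_distrib, ← mul_sum, sum_ite_eq', mem_univ, if_true, mul_one, sub_add_cancel]

theorem hasDerivAt_convex_interp {κ : ℝ → ℝ} {t : ℝ} (hκ : DifferentiableAt ℝ κ t)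
    (a b : ℝ) :
    HasDerivAt (fun τ => (1 - κ τ) * a + κ τ * b) (deriv κ t * (b - a)) t := by
  have hκ' := hκ.hasDerivAt
  refine (((hκ'.const_sub 1).mul_const a).add (hκ'.mul_const b)).congr_deriv ?_
  ring

/-- The convex interpolant conditional flow
`p_t^i(v|x_0,x_1) = (1 − κ_t) δ_{x_0^i}(v) + κ_t δ_{x_1^i}(v)` together with the velocity
`u_t^i(v, z) = (κ̇_t / (1 − κ_t)) [δ_{x_1^i}(v) − δ_{z^i}(v)]` (which depends on `z` only
through `z^i`) satisfies the continuity (Kolmogorov) equation: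
`d/dt p_t^i(v) = ∑_{z^i ∈ [V]} u_t^i(v, z) p_t^i(z^i)`. -/
theorem stmt6 (V L : ℕ) (κ : ℝ → ℝ) (x0 x1 : Fin L → Fin V) (i : Fin L)
    (t : ℝ) (hdiff : DifferentiableAt ℝ κ t) (hlt : κ t < 1) (v : Fin V) :
    HasDerivAt
      (fun τ : ℝ =>
        (1 - κ τ) * (if v = x0 i then (1:ℝ) else 0) + κ τ * (if v = x1 i then 1 else 0))
      (∑ zi : Fin V,
        (deriv κ t / (1 - κ t)) *
            ((if v = x1 i then (1:ℝ) else 0) - (if v = zi then 1 else 0)) *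
          ((1 - κ t) * (if zi = x0 i then (1:ℝ) else 0) + κ t * (if zi = x1 i then 1 else 0)))
      t := by
  have hpos : 1 - κ t ≠ 0 := (sub_pos.2 hlt).ne'
  rw [sum_mul_sub_ite_mul, sum_convex_interp_ite]
  convert hasDerivAt_convex_interp hdiff _ _ using 1
  field_simp
  ring
end

section
/- Let π be a joint probability distribution on [V]^L × [V]^L, let κ: [0,1] → [0,1] be C¹ with κ_0 = 0, κ_1 = 1, κ_t < 1 for t < 1, and define the marginal flow p_t(x) = ∑_{x_0,x_1} p_t(x|x_0,x_1) π(x_0,x_1) with p_t(x|x_0,x_1) = ∏_i [(1−κ_t)δ_{x_0^i}(x^i) + κ_t δ_{x_1^i}(x^i)], conditional velocities u_t^i(x^i,z|x_0,x_1) = (κ̇_t/(1−κ_t))[δ_{x_1^i}(x^i) − δ_{z^i}(x^i)], and unconditional velocity u_t^i(x^i,z) = ∑_{x_0,x_1} u_t^i(x^i,z|x_0,x_1) π(x_0,x_1|z) where π(x_0,x_1|z) = p_t(z|x_0,x_1)π(x_0,x_1)/p_t(z). Let s: [V] × [V] → [0,∞) be a function with s(a,a) = 0 for all a. Then ∫_0^1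 ∑_z p_t(z) ∑_{i=1}^L ∑_{x^i ≠ z^i} u_t^i(x^i,z) s(x^i, z^i) dt = ∑_{x_0,x_1} [∑_{i=1}^L s(x_1^i, x_0^i)] π(x_0, x_1). -/
open Finset

noncomputable section

/-- `δ_b(a)` as a real number. -/
def dlt {V : ℕ} (a b : Fin V) : ℝ := if a = b then 1 else 0

/-- Convex interpolant conditional flow
`p_t(x|x_0,x_1) = ∏ i, [(1−κ_t) δ_{x_0^i}(x^i) + κ_t δ_{x_1^i}(x^i)]`. -/
def pcond {V L : ℕ} (κ : ℝ → ℝ) (t : ℝ) (x x0 x1 : Fin L → Fin V) : ℝ :=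
  ∏ i, ((1 - κ t) * dlt (x i) (x0 i) + κ t * dlt (x i) (x1 i))

/-- Marginal flow `p_t(x) = ∑_{x_0,x_1} p_t(x|x_0,x_1) π(x_0,x_1)`. -/
def pmarg {V L : ℕ} (κ : ℝ → ℝ) (π : (Fin L → Fin V) × (Fin L → Fin V) → ℝ)
    (t : ℝ) (x : Fin L → Fin V) : ℝ :=
  ∑ x0, ∑ x1, pcond κ t x x0 x1 * π (x0, x1)

/-- Unconditional velocity
`u_t^i(a,z) = ∑_{x_0,x_1} u_t^i(a,z|x_0,x_1) π(x_0,x_1|z)`, where the conditional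
velocity is `u_t^i(a,z|x_0,x_1) = (κ̇_t/(1−κ_t))[δ_{x_1^i}(a) − δ_{z^i}(a)]` and
`π(x_0,x_1|z) = p_t(z|x_0,x_1) π(x_0,x_1) / p_t(z)`. -/
def uvel {V L : ℕ} (κ : ℝ → ℝ) (π : (Fin L → Fin V) × (Fin L → Fin V) → ℝ)
    (t : ℝ) (i : Fin L) (a : Fin V) (z : Fin L → Fin V) : ℝ :=
  ∑ x0, ∑ x1,
    (deriv κ t / (1 - κ t)) * (dlt a (x1 i) - dlt a (z i)) *
      (pcond κ t z x0 x1 * π (x0, x1) / pmarg κ π t z)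

/-!
Multiplying the marginal velocity by `p_t(z)` cancels the denominator of the posterior
`π(x₀, x₁ | z)` (if `p_t(z) = 0`, every term `p_t(z | x₀, x₁) π(x₀, x₁)` vanishes as well, since
all of them are nonnegative), so the integrand is the `π`-average of the conditional cost rates.
For fixed `(x₀, x₁)` the conditional velocity only moves coordinate `i` towards `x₁ⁱ`, at rate
`κ̇_t / (1 - κ_t)`; as `s(a, a) = 0` this costs `κ̇_t / (1 - κ_t) · s(x₁ⁱ, zⁱ)`, and the `i`-th
marginal of `p_t(· | x₀, x₁)` is `(1 - κ_t) δ_{x₀ⁱ} + κ_t δ_{x₁ⁱ}`, so the conditional rate is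
`κ̇_t ∑ᵢ s(x₁ⁱ, x₀ⁱ)`. Integrating `κ̇` over `[0, 1]` gives `κ₁ - κ₀ = 1`.
-/

theorem sum_mul_prod_of_sum_eq_one {ι α R : Type*} [Fintype ι] [DecidableEq ι] [Fintype α]
    [CommSemiring R] (q : ι → α → R) (hq : ∀ j, ∑ b, q j b = 1) (f : α → R) (i : ι) :
    ∑ z : ι → α, f (z i) * ∏ j, q j (z j) = ∑ b, f b * q i b := by
  have hfactor : ∀ z : ι → α, f (z i) * ∏ j, q j (z j)
      = ∏ j, (if j = i then f (z j) else 1) * q j (z j) := by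
    intro z
    rw [prod_mul_distrib, prod_ite_eq' univ i (fun j => f (z j)), if_pos (mem_univ i)]
  simp only [hfactor]
  rw [← Fintype.prod_sum fun j b => (if j = i then f b else 1) * q j b,
    prod_eq_single_of_mem i (mem_univ i) fun j _ hj => by simp [hj, hq j]]
  simp

section ConvexInterpolant

variable {V L : ℕ}

theorem dlt_nonneg (a b : Fin V) : 0 ≤ dlt a b := by
  unfold dlt; positivity

theorem sum_mul_dlt (f : Fin V → ℝ) (b : Fin V) : ∑ a, f a * dlt a b = f b := by
  simp [dlt]

theorem sum_dlt (b : Fin V) : ∑ a, dlt a b = 1 := by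
  simpa using sum_mul_dlt 1 b

theorem sum_filter_ne_dlt_sub_dlt_mul {g : Fin V → ℝ} {c : Fin V} (hg : g c = 0) (b : Fin V) :
    ∑ a ∈ univ.filter (· ≠ c), (dlt a b - dlt a c) * g a = g b := by
  rw [sum_filter, ← sum_mul_dlt g b]
  refine sum_congr rfl fun a _ => ?_
  by_cases hac : a = c
  · simp [hac, hg]
  · simp [hac, dlt]

theorem pcond_nonneg {κ : ℝ → ℝ} {t : ℝ} (h0 : 0 ≤ κ t) (h1 : κ t ≤ 1)
    (z x0 x1 : Fin L → Fin V) : 0 ≤ pcond κ t z x0 x1 :=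
  prod_nonneg fun i _ => add_nonneg (mul_nonneg (by linarith) (dlt_nonneg _ _))
    (mul_nonneg h0 (dlt_nonneg _ _))

theorem sum_mul_pcond (κ : ℝ → ℝ) (t : ℝ) (x0 x1 : Fin L → Fin V) (f : Fin V → ℝ) (i : Fin L) :
    ∑ z, f (z i) * pcond κ t z x0 x1 = (1 - κ t) * f (x0 i) + κ t * f (x1 i) := by
  have hq : ∀ j, ∑ b, ((1 - κ t) * dlt b (x0 j) + κ t * dlt b (x1 j)) = 1 := fun j => by
    rw [sum_add_distrib, ← mul_sum, ← mul_sum, sum_dlt, sum_dlt, mul_one, mul_one, sub_add_cancel]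
  unfold pcond
  rw [sum_mul_prod_of_sum_eq_one _ hq]
  simp only [mul_add, sum_add_distrib, mul_left_comm (f _), ← mul_sum, sum_mul_dlt]

end ConvexInterpolant

section MarginalVelocity

variable {V L : ℕ}

def ucond (κ : ℝ → ℝ) (t : ℝ) (i : Fin L) (a : Fin V) (z x1 : Fin L → Fin V) : ℝ :=
  deriv κ t / (1 - κ t) * (dlt a (x1 i) - dlt a (z i))

def dynamicCostRate (κ : ℝ → ℝ) (π : (Fin L → Fin V) × (Fin L → Fin V) → ℝ)
    (s : Fin V → Fin V → ℝ) (t : ℝ) : ℝ :=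
  ∑ z, pmarg κ π t z * ∑ i, ∑ a ∈ univ.filter (· ≠ z i), uvel κ π t i a z * s a (z i)

def condCostRate (κ : ℝ → ℝ) (s : Fin V → Fin V → ℝ) (t : ℝ) (x0 x1 : Fin L → Fin V) : ℝ :=
  ∑ z, pcond κ t z x0 x1 * ∑ i, ∑ a ∈ univ.filter (· ≠ z i), ucond κ t i a z x1 * s a (z i)

def transportCost (π : (Fin L → Fin V) × (Fin L → Fin V) → ℝ) (s : Fin V → Fin V → ℝ) : ℝ :=
  ∑ x0, ∑ x1, (∑ i, s (x1 i) (x0 i)) * π (x0, x1)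

variable {κ : ℝ → ℝ} {t : ℝ} {π : (Fin L → Fin V) × (Fin L → Fin V) → ℝ}

theorem pcond_mul_eq_zero_of_pmarg_eq_zero (h0 : 0 ≤ κ t) (h1 : κ t ≤ 1) (hπ : ∀ p, 0 ≤ π p)
    {z : Fin L → Fin V} (hz : pmarg κ π t z = 0) (x0 x1 : Fin L → Fin V) :
    pcond κ t z x0 x1 * π (x0, x1) = 0 := by
  have hterm : ∀ x0 x1, 0 ≤ pcond κ t z x0 x1 * π (x0, x1) :=
    fun x0 x1 => mul_nonneg (pcond_nonneg h0 h1 _ _ _) (hπ _)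
  have hx0 := (sum_eq_zero_iff_of_nonneg fun x0 _ => sum_nonneg fun x1 _ => hterm x0 x1).1 hz
    x0 (mem_univ _)
  exact (sum_eq_zero_iff_of_nonneg fun x1 _ => hterm x0 x1).1 hx0 x1 (mem_univ _)

theorem pmarg_mul_uvel (h0 : 0 ≤ κ t) (h1 : κ t ≤ 1) (hπ : ∀ p, 0 ≤ π p)
    (i : Fin L) (a : Fin V) (z : Fin L → Fin V) :
    pmarg κ π t z * uvel κ π t i a z
      = ∑ x0, ∑ x1, ucond κ t i a z x1 * (pcond κ t z x0 x1 * π (x0, x1)) := by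
  simp only [uvel, mul_sum]
  refine sum_congr rfl fun x0 _ => sum_congr rfl fun x1 _ => ?_
  rw [mul_left_comm, mul_div_cancel_of_imp' fun hz =>
    pcond_mul_eq_zero_of_pmarg_eq_zero h0 h1 hπ hz x0 x1, ucond]

theorem condCostRate_eq {s : Fin V → Fin V → ℝ} (hs0 : ∀ a, s a a = 0) (hκ : κ t ≠ 1)
    (x0 x1 : Fin L → Fin V) :
    condCostRate κ s t x0 x1 = deriv κ t * ∑ i, s (x1 i) (x0 i) := by
  have hκ' : 1 - κ t ≠ 0 := sub_ne_zero.2 hκ.symm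
  have hcond : ∀ z i, ∑ a ∈ univ.filter (· ≠ z i), ucond κ t i a z x1 * s a (z i)
      = deriv κ t / (1 - κ t) * s (x1 i) (z i) := fun z i => by
    simp only [ucond, mul_assoc, ← mul_sum]
    rw [sum_filter_ne_dlt_sub_dlt_mul (g := fun a => s a (z i)) (hs0 _)]
  calc condCostRate κ s t x0 x1
      = deriv κ t / (1 - κ t) * ∑ i, ∑ z, s (x1 i) (z i) * pcond κ t z x0 x1 := by
        simp only [condCostRate, hcond, ← mul_sum]
        rw [sum_comm, mul_sum]
        refine sum_congr rfl fun z _ => ?_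
        rw [← sum_mul]
        ring
    _ = deriv κ t / (1 - κ t) * ∑ i, (1 - κ t) * s (x1 i) (x0 i) := by
        congr 1
        refine sum_congr rfl fun i _ => ?_
        rw [sum_mul_pcond, hs0, mul_zero, add_zero]
    _ = deriv κ t * ∑ i, s (x1 i) (x0 i) := by
        rw [← mul_sum, ← mul_assoc, div_mul_cancel₀ _ hκ']

theorem dynamicCostRate_eq_sum_condCostRate (h0 : 0 ≤ κ t) (h1 : κ t ≤ 1)
    (hπ : ∀ p, 0 ≤ π p) (s : Fin V → Fin V → ℝ) :
    dynamicCostRate κ π s t = ∑ x0, ∑ x1, π (x0, x1) * condCostRate κ s t x0 x1 := by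
  simp only [dynamicCostRate, condCostRate, mul_sum, ← mul_assoc, pmarg_mul_uvel h0 h1 hπ, sum_mul]
  simp_rw [sum_comm (s := univ.filter _) (t := (univ : Finset (Fin L → Fin V))),
    sum_comm (s := (univ : Finset (Fin L))) (t := (univ : Finset (Fin L → Fin V)))]
  conv_rhs => rw [sum_comm_cycle]
  ac_rfl

theorem dynamicCostRate_eq {s : Fin V → Fin V → ℝ} (h0 : 0 ≤ κ t) (h1 : κ t < 1)
    (hπ : ∀ p, 0 ≤ π p) (hs0 : ∀ a, s a a = 0) :
    dynamicCostRate κ π s t = deriv κ t * transportCost π s := by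
  rw [dynamicCostRate_eq_sum_condCostRate h0 h1.le hπ, transportCost, mul_sum]
  refine sum_congr rfl fun x0 _ => ?_
  rw [mul_sum]
  refine sum_congr rfl fun x1 _ => ?_
  rw [condCostRate_eq hs0 h1.ne]
  ring

end MarginalVelocity

theorem stmt8_general {V L : ℕ} (π : (Fin L → Fin V) × (Fin L → Fin V) → ℝ)
    (hπ : ∀ p, 0 ≤ π p)
    (κ : ℝ → ℝ) (hκ : ContDiffOn ℝ 1 κ (Set.Icc 0 1))
    (hκ0 : κ 0 = 0) (hκ1 : κ 1 = 1)
    (hκmem : ∀ t ∈ Set.Icc (0:ℝ) 1, κ t ∈ Set.Icc (0:ℝ) 1)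
    (hκlt : ∀ t ∈ Set.Ico (0:ℝ) 1, κ t < 1)
    (s : Fin V → Fin V → ℝ) (hs0 : ∀ a, s a a = 0) :
    (∫ t in (0:ℝ)..1, ∑ z, pmarg κ π t z *
        ∑ i, ∑ a ∈ univ.filter (· ≠ z i), uvel κ π t i a z * s a (z i))
      = ∑ x0, ∑ x1, (∑ i, s (x1 i) (x0 i)) * π (x0, x1) := by
  have hrate : Set.EqOn (dynamicCostRate κ π s) (fun t => deriv κ t * transportCost π s)
      (Set.Ioo 0 1) := fun t ht =>
    dynamicCostRate_eq (hκmem t (Set.Ioo_subset_Icc_self ht)).1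
      (hκlt t (Set.Ioo_subset_Ico_self ht)) hπ hs0
  calc ∫ t in (0:ℝ)..1, dynamicCostRate κ π s t
      = ∫ t in (0:ℝ)..1, deriv κ t * transportCost π s :=
        intervalIntegral.integral_congr_Ioo_of_le zero_le_one hrate
    _ = transportCost π s := by
        rw [intervalIntegral.integral_mul_const,
          intervalIntegral.integral_deriv_of_contDiffOn_Icc hκ zero_le_one, hκ1, hκ0, sub_zero,
          one_mul]

/-- **Theorem 1**: the dynamic transport cost of the convex interpolant discrete flow,
weighting each mass transition by the token dissimilarity `s`, equals the Kantorovich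
transport cost with ground cost `c(x_0,x_1) = ∑ i, s(x_1^i, x_0^i)`. -/
theorem stmt8 {V L : ℕ} (π : (Fin L → Fin V) × (Fin L → Fin V) → ℝ)
    (hπ : ∀ p, 0 ≤ π p) (hπ1 : ∑ p, π p = 1)
    (κ : ℝ → ℝ) (hκ : ContDiffOn ℝ 1 κ (Set.Icc 0 1))
    (hκ0 : κ 0 = 0) (hκ1 : κ 1 = 1)
    (hκmem : ∀ t ∈ Set.Icc (0:ℝ) 1, κ t ∈ Set.Icc (0:ℝ) 1)
    (hκlt : ∀ t ∈ Set.Ico (0:ℝ) 1, κ t < 1)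
    (s : Fin V → Fin V → ℝ) (hs : ∀ a b, 0 ≤ s a b) (hs0 : ∀ a, s a a = 0) :
    (∫ t in (0:ℝ)..1, ∑ z, pmarg κ π t z *
        ∑ i, ∑ a ∈ univ.filter (· ≠ z i), uvel κ π t i a z * s a (z i))
      = ∑ x0, ∑ x1, (∑ i, s (x1 i) (x0 i)) * π (x0, x1) :=
  stmt8_general π hπ κ hκ hκ0 hκ1 hκmem hκlt s hs0
end
end
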